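/- arXiv:1205.2346 — 2 statements merged into one kernel-verified Lean document; each statement's English description precedes it below -/
import Mathlib

section
/- If Ω₀ > Ω₁ := (π/2)λ^TF, then there exists a unique R₁ ∈ (0, R^TF) such that H^TF(R₁) = 0 and H^TF(r) < 0 for all 0 ≤ r < R₁, and H^TF(r) > 0 for R₁ < r < R^TF. -/
open MeasureTheory Set Real intervalIntegral

noncomputable def lamTF (s : ℝ) : ℝ := (2 * (s + 2) / (π * s)) ^ (s / (s + 2))

noncomputable def RTF (s : ℝ) : ℝ := (lamTF s) ^ (1 / s)

noncomputable def rhoTF (s : ℝ) (r : ℝ) : ℝ := (1 / 2) * (lamTF s - r ^ s)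

noncomputable def FTF (s Ω₀ : ℝ) (r : ℝ) : ℝ := -Ω₀ * ∫ t in r..(RTF s), t * rhoTF s t

noncomputable def HTF (s Ω₀ : ℝ) (r : ℝ) : ℝ := (1 / 2) * rhoTF s r + FTF s Ω₀ r

noncomputable def Omega1 (s : ℝ) : ℝ := (π / 2) * lamTF s

/-- If `Ω₀ > Ω₁` there is a unique `R₁ ∈ (0, R^TF)` with `H^TF(R₁) = 0`, `H^TF < 0`
on `[0, R₁)` and `H^TF > 0` on `(R₁, R^TF)`. -/
theorem HTF_unique_zero (s Ω₀ : ℝ) (hs : 2 ≤ s) (hΩ : Omega1 s < Ω₀) :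
    ∃ R₁ ∈ Set.Ioo (0 : ℝ) (RTF s),
      HTF s Ω₀ R₁ = 0 ∧
      (∀ r : ℝ, 0 ≤ r → r < R₁ → HTF s Ω₀ r < 0) ∧
      (∀ r : ℝ, R₁ < r → r < RTF s → 0 < HTF s Ω₀ r) ∧
      (∀ r ∈ Set.Ioo (0 : ℝ) (RTF s), HTF s Ω₀ r = 0 → r = R₁) := by
  have hs0 : (0:ℝ) < s := by linarith
  have hs2 : (0:ℝ) < s + 2 := by linarith
  have hπ : (0:ℝ) < π := Real.pi_pos
  set lam := lamTF s with hlam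
  set R := RTF s with hRdef
  have hA : (0:ℝ) < 2 * (s + 2) / (π * s) := by positivity
  have hlam0 : 0 < lam := Real.rpow_pos_of_pos hA _
  have hR0 : 0 < R := Real.rpow_pos_of_pos hlam0 _
  have hRs : R ^ s = lam := by
    rw [hRdef, RTF, ← Real.rpow_mul hlam0.le, one_div_mul_cancel hs0.ne', Real.rpow_one]
  have hRR : R * R = lam ^ (2 / s) := by
    rw [hRdef, RTF, ← Real.rpow_add hlam0]
    norm_num
    ring_nf
  have hRs2 : R ^ (s + 2) = lam * (R * R) := by
    rw [Real.rpow_add hR0, hRs, show (2:ℝ) = ((2:ℕ):ℝ) by norm_num, Real.rpow_natCast, pow_two]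
  have hlamRR : lam * (R * R) = 2 * (s + 2) / (π * s) := by
    rw [hRR]
    nth_rewrite 1 [show lam = lam ^ (1:ℝ) from (Real.rpow_one lam).symm]
    rw [← Real.rpow_add hlam0, hlam, lamTF, ← Real.rpow_mul hA.le,
      show s / (s + 2) * (1 + 2 / s) = 1 by field_simp, Real.rpow_one]
  have hΩ0 : 0 < Ω₀ := lt_trans (by rw [Omega1, ← hlam]; positivity) hΩ
  -- the explicit form of HTF on [0, R]
  set E : ℝ → ℝ := fun r =>
    (1/4) * (lam - r ^ s) -
      (Ω₀/2) * (lam * (R * R - r * r) / 2 - (R ^ (s+2) - r ^ (s+2)) / (s+2)) with hEdef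
  set φ : ℝ → ℝ := fun r => -(s/4) * r ^ (s-2) + (Ω₀/2) * (lam - r ^ s) with hφdef
  have hmulpow : ∀ t : ℝ, 0 ≤ t → t * t ^ s = t ^ (s+1) := by
    intro t ht
    rcases ht.eq_or_lt with h | h
    · rw [← h, Real.zero_rpow (by linarith : s + 1 ≠ 0), Real.zero_rpow hs0.ne', mul_zero]
    · rw [Real.rpow_add_one h.ne']; ring
  have hHE : ∀ r : ℝ, 0 ≤ r → r ≤ R → HTF s Ω₀ r = E r := by
    intro r hr0 hrR
    have hcongr : Set.EqOn (fun t => t * rhoTF s t)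
        (fun t => (1/2) * lam * t - (1/2) * t ^ (s+1)) (Set.uIcc r R) := by
      intro t ht
      rw [Set.uIcc_of_le hrR] at ht
      have ht0 : 0 ≤ t := le_trans hr0 ht.1
      simp only [rhoTF, ← hlam]
      rw [← hmulpow t ht0]; ring
    have hint : ∫ t in r..R, t * rhoTF s t
        = (1/2) * lam * ((R^2 - r^2)/2) - (1/2) * ((R ^ (s+2) - r ^ (s+2)) / (s+2)) := by
      rw [intervalIntegral.integral_congr hcongr, intervalIntegral.integral_sub,
        intervalIntegral.integral_const_mul, intervalIntegral.integral_const_mul,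
        integral_id, integral_rpow (Or.inl (by linarith : (-1:ℝ) < s + 1))]
      · norm_num
        rw [show s + 1 + 1 = s + 2 by ring]
      · exact ((continuous_const.mul continuous_id).intervalIntegrable _ _)
      · exact (continuous_const.mul (Real.continuous_rpow_const (by linarith))).intervalIntegrable _ _
    rw [HTF, FTF, ← hRdef, hint, hEdef]
    simp only [rhoTF, ← hlam]
    ring
  -- derivative of E
  have hEderiv : ∀ r : ℝ, HasDerivAt E
      (-(s/4) * r ^ (s-1) + (Ω₀/2) * (lam * r - r ^ (s+1))) r := by
    intro r
    have h1 : HasDerivAt (fun x : ℝ => x ^ s) (s * r ^ (s-1)) r :=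
      Real.hasDerivAt_rpow_const (Or.inr (by linarith))
    have h2 : HasDerivAt (fun x : ℝ => x ^ (s+2)) ((s+2) * r ^ (s+1)) r := by
      have := Real.hasDerivAt_rpow_const (x := r) (p := s + 2) (Or.inr (by linarith))
      rwa [show s + 2 - 1 = s + 1 by ring] at this
    have h3 : HasDerivAt (fun x : ℝ => x * x) (1 * r + r * 1) r :=
      (hasDerivAt_id r).mul (hasDerivAt_id r)
    have hd : HasDerivAt E
        ((1/4) * (0 - s * r ^ (s-1)) -
          (Ω₀/2) * ((lam * (0 - (1 * r + r * 1))) / 2 - (0 - (s+2) * r ^ (s+1)) / (s+2))) r := by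
      exact ((((hasDerivAt_const r lam).sub h1).const_mul (1/4)).sub
        ((((((hasDerivAt_const r (R*R)).sub h3).const_mul lam).div_const 2).sub
          (((hasDerivAt_const r (R ^ (s+2))).sub h2).div_const (s+2))).const_mul (Ω₀/2)))
    convert hd using 1
    field_simp
    ring
  have hEcont : Continuous E :=
    continuous_iff_continuousAt.mpr fun x => (hEderiv x).continuousAt
  have hderiv_eq : ∀ x : ℝ, 0 ≤ x → deriv E x = x * φ x := by
    intro x hx
    rw [(hEderiv x).deriv, hφdef]
    rcases hx.eq_or_lt with h | h
    · rw [← h]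
      rw [Real.zero_rpow (by linarith : s - 1 ≠ 0), Real.zero_rpow (by linarith : s + 1 ≠ 0)]
      ring
    · rw [show s - 1 = (s - 2) + 1 by ring, Real.rpow_add_one h.ne',
        show s + 1 = s + 0 + 1 by ring, Real.rpow_add_one h.ne']
      ring_nf
  -- φ is strictly decreasing on [0, ∞)
  have hφanti : StrictAntiOn φ (Set.Ici (0:ℝ)) := by
    intro x hx y hy hxy
    have h1 : x ^ (s-2) ≤ y ^ (s-2) :=
      Real.rpow_le_rpow hx hxy.le (by linarith)
    have h2 : x ^ s < y ^ s := Real.rpow_lt_rpow hx hxy hs0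
    simp only [hφdef]
    have t1 : (s/4) * x ^ (s-2) ≤ (s/4) * y ^ (s-2) :=
      mul_le_mul_of_nonneg_left h1 (by positivity)
    have t2 : (Ω₀/2) * x ^ s < (Ω₀/2) * y ^ s :=
      mul_lt_mul_of_pos_left h2 (by positivity)
    nlinarith
  have hφcont : Continuous φ :=
    (continuous_const.mul (Real.continuous_rpow_const (by linarith : (0:ℝ) ≤ s - 2))).add
      (continuous_const.mul (continuous_const.sub (Real.continuous_rpow_const hs0.le)))
  have hφR : φ R < 0 := by
    simp only [hφdef, hRs, sub_self, mul_zero, add_zero]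
    have : 0 < R ^ (s - 2) := Real.rpow_pos_of_pos hR0 _
    nlinarith
  -- E R = 0 and E 0 < 0
  have hER : E R = 0 := by simp only [hEdef, hRs]; ring
  have hE0 : E 0 < 0 := by
    have h1 : E 0 = lam / 4 - Ω₀ / (2 * π) := by
      simp only [hEdef]
      rw [Real.zero_rpow hs0.ne', Real.zero_rpow (by linarith : s + 2 ≠ 0), mul_zero, sub_zero,
        sub_zero, hRs2, hlamRR]
      field_simp
      ring
    have h2 : π / 2 * lam < Ω₀ := by rw [Omega1, ← hlam] at hΩ; exact hΩ
    rw [h1, sub_neg, div_lt_div_iff₀ (by norm_num) (by positivity)]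
    nlinarith
  -- φ 0 > 0 (otherwise E would be strictly decreasing on [0,R], contradicting E 0 < 0 = E R)
  have hφ0 : 0 < φ 0 := by
    by_contra h
    push_neg at h
    have hanti : StrictAntiOn E (Set.Icc 0 R) := by
      apply strictAntiOn_of_deriv_neg (convex_Icc _ _) hEcont.continuousOn
      intro x hx
      rw [interior_Icc] at hx
      rw [hderiv_eq x hx.1.le]
      have hφx : φ x < φ 0 := hφanti (Set.mem_Ici.mpr le_rfl) (Set.mem_Ici.mpr hx.1.le) hx.1
      exact mul_neg_of_pos_of_neg hx.1 (lt_of_lt_of_le hφx h)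
    have := hanti (Set.left_mem_Icc.mpr hR0.le) (Set.right_mem_Icc.mpr hR0.le) hR0
    rw [hER] at this
    linarith
  -- the critical point c
  obtain ⟨c, hc, hφc⟩ :=
    intermediate_value_Ioo' hR0.le hφcont.continuousOn (Set.mem_Ioo.mpr ⟨hφR, hφ0⟩)
  have hc0 : 0 < c := hc.1
  have hcR : c < R := hc.2
  have hmono : StrictMonoOn E (Set.Icc 0 c) := by
    apply strictMonoOn_of_deriv_pos (convex_Icc _ _) hEcont.continuousOn
    intro x hx
    rw [interior_Icc] at hx
    rw [hderiv_eq x hx.1.le]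
    have hφx : φ c < φ x := hφanti (Set.mem_Ici.mpr hx.1.le) (Set.mem_Ici.mpr hc0.le) hx.2
    rw [hφc] at hφx
    exact mul_pos hx.1 hφx
  have hanti : StrictAntiOn E (Set.Icc c R) := by
    apply strictAntiOn_of_deriv_neg (convex_Icc _ _) hEcont.continuousOn
    intro x hx
    rw [interior_Icc] at hx
    rw [hderiv_eq x (le_trans hc0.le hx.1.le)]
    have hφx : φ x < φ c := hφanti (Set.mem_Ici.mpr hc0.le)
      (Set.mem_Ici.mpr (le_trans hc0.le hx.1.le)) hx.1
    rw [hφc] at hφx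
    exact mul_neg_of_pos_of_neg (lt_trans hc0 hx.1) hφx
  have hEc : 0 < E c := by
    have := hanti (Set.left_mem_Icc.mpr hcR.le) (Set.right_mem_Icc.mpr hcR.le) hcR
    rw [hER] at this
    exact this
  -- the zero R₁
  obtain ⟨R₁, hR₁, hER₁⟩ :=
    intermediate_value_Ioo hc0.le hEcont.continuousOn (Set.mem_Ioo.mpr ⟨hE0, hEc⟩)
  have hR₁0 : 0 < R₁ := hR₁.1
  have hR₁c : R₁ < c := hR₁.2
  have hR₁R : R₁ < R := lt_trans hR₁c hcR
  -- the negativity claim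
  have hneg : ∀ r : ℝ, 0 ≤ r → r < R₁ → HTF s Ω₀ r < 0 := by
    intro r hr0 hrR₁
    rw [hHE r hr0 (le_of_lt (lt_trans hrR₁ hR₁R))]
    have := hmono (Set.mem_Icc.mpr ⟨hr0, le_of_lt (lt_trans hrR₁ hR₁c)⟩)
      (Set.mem_Icc.mpr ⟨hR₁0.le, hR₁c.le⟩) hrR₁
    rw [hER₁] at this
    exact this
  have hpos : ∀ r : ℝ, R₁ < r → r < R → 0 < HTF s Ω₀ r := by
    intro r hrl hrR
    rw [hHE r (le_of_lt (lt_trans hR₁0 hrl)) hrR.le]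
    rcases le_or_gt r c with h | h
    · have := hmono (Set.mem_Icc.mpr ⟨hR₁0.le, hR₁c.le⟩)
        (Set.mem_Icc.mpr ⟨le_of_lt (lt_trans hR₁0 hrl), h⟩) hrl
      rw [hER₁] at this
      exact this
    · have := hanti (Set.mem_Icc.mpr ⟨h.le, hrR.le⟩)
        (Set.mem_Icc.mpr ⟨hcR.le, le_rfl⟩) hrR
      rw [hER] at this
      exact this
  refine ⟨R₁, ⟨hR₁0, hR₁R⟩, ?_, hneg, hpos, ?_⟩
  · rw [hHE R₁ hR₁0.le hR₁R.le]; exact hER₁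
  · intro r hr hHr
    rcases lt_trichotomy r R₁ with h | h | h
    · exact absurd hHr (ne_of_lt (hneg r hr.1.le h))
    · exact h
    · exact absurd hHr.symm (ne_of_lt (hpos r h hr.2))
end

section
/- Both R₁ and R₂ converge to R^TF as Ω₀ → ∞: the unique zero R₁ ∈ (0,R^TF) of H^TF and the unique zero R₂ ∈ (0,R^TF) of m⋆ satisfy R₁ → R^TF and R₂ → R^TF as Ω₀ → ∞. -/
open MeasureTheory Set Real Filter Topology intervalIntegral

noncomputable def mstar (s Ω₀ : ℝ) (r : ℝ) : ℝ :=
  (1 / 2) * deriv (deriv (fun t => Real.log (rhoTF s t))) r + 2 * Ω₀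

section Aux

variable {s : ℝ}

lemma lamTF_pos (hs : 2 ≤ s) : 0 < lamTF s := by
  have hπ := Real.pi_pos
  have : 0 < 2 * (s + 2) / (π * s) := div_pos (by nlinarith) (by nlinarith)
  exact Real.rpow_pos_of_pos this _

lemma RTF_pos (hs : 2 ≤ s) : 0 < RTF s :=
  Real.rpow_pos_of_pos (lamTF_pos hs) _

lemma RTF_rpow (hs : 2 ≤ s) : RTF s ^ s = lamTF s := by
  have hs0 : s ≠ 0 := by linarith
  rw [RTF, ← Real.rpow_mul (lamTF_pos hs).le, one_div, inv_mul_cancel₀ hs0, Real.rpow_one]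

lemma rpow_lt_lam (hs : 2 ≤ s) {r : ℝ} (h0 : 0 ≤ r) (h1 : r < RTF s) :
    r ^ s < lamTF s := by
  calc r ^ s < RTF s ^ s := Real.rpow_lt_rpow h0 h1 (by linarith)
  _ = lamTF s := RTF_rpow hs

lemma rhoTF_pos (hs : 2 ≤ s) {r : ℝ} (h0 : 0 ≤ r) (h1 : r < RTF s) :
    0 < rhoTF s r := by
  have := rpow_lt_lam hs h0 h1
  unfold rhoTF; nlinarith

lemma rhoTF_anti (hs : 2 ≤ s) {a b : ℝ} (h0 : 0 ≤ a) (hab : a ≤ b) :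
    rhoTF s b ≤ rhoTF s a := by
  have : a ^ s ≤ b ^ s := Real.rpow_le_rpow h0 hab (by linarith)
  unfold rhoTF; nlinarith

lemma rhoTF_le (hs : 2 ≤ s) {r : ℝ} (h0 : 0 ≤ r) :
    rhoTF s r ≤ lamTF s / 2 := by
  have : (0:ℝ) ≤ r ^ s := Real.rpow_nonneg h0 _
  unfold rhoTF; nlinarith

/-- Value of the second derivative of `log ∘ ρ` on `(0, R^TF)`. -/
lemma deriv2_log_rho (hs : 2 ≤ s) {r : ℝ} (hr : r ∈ Set.Ioo (0:ℝ) (RTF s)) :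
    deriv (deriv (fun t => Real.log (rhoTF s t))) r =
      ((1/2) * (-(s * ((s-1) * r ^ (s-1-1)))) * rhoTF s r -
        (1/2) * (-(s * r ^ (s-1))) * ((1/2) * (-(s * r ^ (s-1))))) / (rhoTF s r) ^ 2 := by
  set g1 : ℝ → ℝ := fun x => ((1/2) * (-(s * x ^ (s-1)))) / rhoTF s x with hg1
  have key : ∀ x ∈ Set.Ioo (0:ℝ) (RTF s),
      HasDerivAt (fun t => Real.log (rhoTF s t)) (g1 x) x := by
    intro x hx
    have hne : rhoTF s x ≠ 0 := (rhoTF_pos hs hx.1.le hx.2).ne'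
    have hpow : HasDerivAt (fun t : ℝ => t ^ s) (s * x ^ (s-1)) x :=
      Real.hasDerivAt_rpow_const (Or.inl hx.1.ne')
    have hρ : HasDerivAt (rhoTF s) ((1/2) * (-(s * x ^ (s-1)))) x := by
      unfold rhoTF
      simpa using ((hasDerivAt_const x (lamTF s)).sub hpow).const_mul (1/2 : ℝ)
    simpa [hg1] using hρ.log hne
  have hEq : deriv (fun t => Real.log (rhoTF s t)) =ᶠ[𝓝 r] g1 :=
    Filter.eventually_of_mem (isOpen_Ioo.mem_nhds hr) fun x hx => (key x hx).deriv
  rw [hEq.deriv_eq]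
  have hne : rhoTF s r ≠ 0 := (rhoTF_pos hs hr.1.le hr.2).ne'
  have hnum : HasDerivAt (fun x : ℝ => (1/2) * (-(s * x ^ (s-1))))
      ((1/2) * (-(s * ((s-1) * r ^ (s-1-1))))) r := by
    have hpow : HasDerivAt (fun t : ℝ => t ^ (s-1)) ((s-1) * r ^ (s-1-1)) r :=
      Real.hasDerivAt_rpow_const (Or.inl hr.1.ne')
    have := ((hpow.const_mul s).neg).const_mul (1/2 : ℝ)
    simpa [mul_comm, mul_assoc, mul_left_comm] using this
  have hden : HasDerivAt (rhoTF s) ((1/2) * (-(s * r ^ (s-1)))) r := by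
    have hpow : HasDerivAt (fun t : ℝ => t ^ s) (s * r ^ (s-1)) r :=
      Real.hasDerivAt_rpow_const (Or.inl hr.1.ne')
    unfold rhoTF
    simpa using ((hasDerivAt_const r (lamTF s)).sub hpow).const_mul (1/2 : ℝ)
  exact (hnum.div hden hne).deriv

end Aux

set_option maxHeartbeats 1600000 in
/-- The radii `R₁(Ω₀)` (unique zero of `H^TF` in `(0,R^TF)`) and `R₂(Ω₀)` (unique zero of
`m⋆` in `(0,R^TF)`) both converge to `R^TF` as `Ω₀ → ∞`. -/
theorem radii_tend_to_RTF (s : ℝ) (hs : 2 ≤ s) (R₁ R₂ : ℝ → ℝ)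
    (hR₁ : ∀ Ω₀ : ℝ, Omega1 s < Ω₀ →
      R₁ Ω₀ ∈ Set.Ioo (0 : ℝ) (RTF s) ∧ HTF s Ω₀ (R₁ Ω₀) = 0 ∧
        ∀ r ∈ Set.Ioo (0 : ℝ) (RTF s), HTF s Ω₀ r = 0 → r = R₁ Ω₀)
    (hR₂ : ∀ Ω₀ : ℝ, Omega1 s < Ω₀ →
      R₂ Ω₀ ∈ Set.Ioo (0 : ℝ) (RTF s) ∧ mstar s Ω₀ (R₂ Ω₀) = 0 ∧
        ∀ r ∈ Set.Ioo (0 : ℝ) (RTF s), mstar s Ω₀ r = 0 → r = R₂ Ω₀) :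
    Tendsto R₁ atTop (𝓝 (RTF s)) ∧ Tendsto R₂ atTop (𝓝 (RTF s)) := by
  have hs0 : (0:ℝ) < s := by linarith
  have hL : 0 < lamTF s := lamTF_pos hs
  have hR0 : 0 < RTF s := RTF_pos hs
  constructor
  · -- R₁ part
    rw [Metric.tendsto_atTop]
    intro ε hε
    set ε' := min ε (RTF s / 2) with hε'def
    have hε' : 0 < ε' := lt_min hε (by linarith)
    have hε'le : ε' ≤ ε := min_le_left _ _
    have hε'R : ε' ≤ RTF s / 2 := min_le_right _ _
    set a := RTF s - ε' with ha
    set b := RTF s - ε' / 2 with hb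
    have ha0 : 0 < a := by simp only [ha]; linarith
    have hab : a < b := by simp only [ha, hb]; linarith
    have hbR : b < RTF s := by simp only [hb]; linarith
    have hρb : 0 < rhoTF s b := rhoTF_pos hs (by linarith) hbR
    set c := (b - a) * (a * rhoTF s b) with hc
    have hcpos : 0 < c := mul_pos (by simp only [ha, hb]; linarith) (mul_pos ha0 hρb)
    refine ⟨max (Omega1 s + 1) (lamTF s / (4 * c) + 1), fun Ω₀ hΩ => ?_⟩
    have hΩ1 : Omega1 s < Ω₀ := by
      have := le_trans (le_max_left (Omega1 s + 1) (lamTF s / (4 * c) + 1)) hΩ; linarith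
    obtain ⟨hmem, hzero, -⟩ := hR₁ Ω₀ hΩ1
    set r := R₁ Ω₀ with hrdef
    have hra : a < r := by
      by_contra hra
      push_neg at hra
      -- derive contradiction
      have hcont : Continuous fun t : ℝ => t * rhoTF s t := by
        have : Continuous fun t : ℝ => t ^ s := Real.continuous_rpow_const hs0.le
        unfold rhoTF; fun_prop
      have hint : IntervalIntegrable (fun t => t * rhoTF s t) volume r (RTF s) :=
        hcont.intervalIntegrable _ _
      have hnonneg : ∀ x ∈ Set.Ioc r (RTF s), 0 ≤ x * rhoTF s x := by
        intro x hx
        have hx0 : 0 < x := lt_trans hmem.1 hx.1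
        have : 0 ≤ rhoTF s x := by
          rcases eq_or_lt_of_le hx.2 with h | h
          · rw [h]
            have h2 : RTF s ^ s = lamTF s := RTF_rpow hs
            unfold rhoTF; nlinarith
          · exact (rhoTF_pos hs hx0.le h).le
        positivity
      have hIab : c ≤ ∫ t in a..b, t * rhoTF s t := by
        have h1 : ∫ t in a..b, (a * rhoTF s b) ≤ ∫ t in a..b, t * rhoTF s t := by
          apply intervalIntegral.integral_mono_on hab.le
            (intervalIntegrable_const) (hcont.intervalIntegrable _ _)
          intro x hx
          have hxa : a ≤ x := hx.1
          have hρ : rhoTF s b ≤ rhoTF s x := rhoTF_anti hs (le_trans ha0.le hxa) (hx.2)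
          have hx0 : 0 ≤ x := le_trans ha0.le hxa
          exact mul_le_mul hxa hρ hρb.le hx0
        rw [intervalIntegral.integral_const, smul_eq_mul] at h1
        calc c = (b - a) * (a * rhoTF s b) := hc
        _ ≤ ∫ t in a..b, t * rhoTF s t := h1
      have hImono : (∫ t in a..b, t * rhoTF s t) ≤ ∫ t in r..(RTF s), t * rhoTF s t := by
        apply intervalIntegral.integral_mono_interval hra hab.le hbR.le
        · exact MeasureTheory.ae_restrict_of_forall_mem measurableSet_Ioc hnonneg
        · exact hint
      have hI : c ≤ ∫ t in r..(RTF s), t * rhoTF s t := le_trans hIab hImono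
      -- from HTF = 0
      have heq : Ω₀ * ∫ t in r..(RTF s), t * rhoTF s t = (1/2) * rhoTF s r := by
        have := hzero
        unfold HTF FTF at this
        linarith
      have hρr : rhoTF s r ≤ lamTF s / 2 := rhoTF_le hs hmem.1.le
      have hΩc : Ω₀ * c ≤ lamTF s / 4 := by
        have h2 : Ω₀ * c ≤ Ω₀ * ∫ t in r..(RTF s), t * rhoTF s t := by
          apply mul_le_mul_of_nonneg_left hI
          have hO1 : 0 < Omega1 s := by
            have := Real.pi_pos; unfold Omega1; positivity
          linarith
        rw [heq] at h2; linarith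
      have hΩbig : lamTF s / (4 * c) + 1 ≤ Ω₀ := le_trans (le_max_right _ _) hΩ
      have : lamTF s / (4 * c) < Ω₀ := by linarith
      rw [div_lt_iff₀ (by positivity)] at this
      nlinarith
    rw [Real.dist_eq, abs_lt]
    constructor
    · simp only [ha] at hra; linarith
    · linarith [hmem.2]
  · -- R₂ part
    rw [Metric.tendsto_atTop]
    intro ε hε
    set ε' := min ε (RTF s / 2) with hε'def
    have hε' : 0 < ε' := lt_min hε (by linarith)
    have hε'le : ε' ≤ ε := min_le_left _ _
    have hε'R : ε' ≤ RTF s / 2 := min_le_right _ _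
    set a := RTF s - ε' with ha
    have ha0 : 0 < a := by simp only [ha]; linarith
    have haR : a < RTF s := by simp only [ha]; linarith
    have hρa : 0 < rhoTF s a := rhoTF_pos hs ha0.le haR
    set Anum := (1/2) * s * (s-1) * (RTF s) ^ (s-1-1) * (lamTF s / 2) +
      (1/4) * (s * (RTF s) ^ (s-1))^2 with hAnum
    have hAnum0 : 0 ≤ Anum := by
      have h1 : (0:ℝ) ≤ (RTF s) ^ (s-1-1) := Real.rpow_nonneg hR0.le _
      have h2 : (0:ℝ) ≤ (s * (RTF s) ^ (s-1))^2 := sq_nonneg _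
      have h3 : (0:ℝ) ≤ (1/2) * s * (s-1) * (RTF s) ^ (s-1-1) * (lamTF s / 2) :=
        mul_nonneg (mul_nonneg (by nlinarith) h1) (by positivity)
      rw [hAnum]; linarith
    set M := Anum / (rhoTF s a) ^ 2 with hM
    have hM0 : 0 ≤ M := by positivity
    refine ⟨max (Omega1 s + 1) (M + 1), fun Ω₀ hΩ => ?_⟩
    have hΩ1 : Omega1 s < Ω₀ := by
      have := le_trans (le_max_left (Omega1 s + 1) (M + 1)) hΩ; linarith
    obtain ⟨hmem, hzero, -⟩ := hR₂ Ω₀ hΩ1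
    set r := R₂ Ω₀ with hrdef
    have hra : a < r := by
      by_contra hra
      push_neg at hra
      have hρr : 0 < rhoTF s r := rhoTF_pos hs hmem.1.le hmem.2
      have hder := deriv2_log_rho hs hmem
      have hmeq : (1/2) * deriv (deriv (fun t => Real.log (rhoTF s t))) r + 2 * Ω₀ = 0 := hzero
      rw [hder] at hmeq
      -- bound the numerator
      set P := r ^ (s-1-1) with hP
      set Q := r ^ (s-1) with hQ
      have hP0 : 0 ≤ P := Real.rpow_nonneg hmem.1.le _
      have hQ0 : 0 ≤ Q := Real.rpow_nonneg hmem.1.le _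
      have hPle : P ≤ (RTF s) ^ (s-1-1) :=
        Real.rpow_le_rpow hmem.1.le hmem.2.le (by linarith)
      have hQle : Q ≤ (RTF s) ^ (s-1) :=
        Real.rpow_le_rpow hmem.1.le hmem.2.le (by linarith)
      have hρrle : rhoTF s r ≤ lamTF s / 2 := rhoTF_le hs hmem.1.le
      -- A is the negated numerator
      set A := -((1/2) * (-(s * ((s-1) * P))) * rhoTF s r -
        (1/2) * (-(s * Q)) * ((1/2) * (-(s * Q)))) with hA
      have hAeq : A = (1/2) * s * (s-1) * (P * rhoTF s r) + (1/4) * s * s * (Q * Q) := by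
        rw [hA]; ring
      have hc₁ : (0:ℝ) ≤ (1/2) * s * (s-1) := by nlinarith
      have hc₂ : (0:ℝ) ≤ (1/4) * s * s := by nlinarith
      have hAle : A ≤ Anum := by
        have h1 : P * rhoTF s r ≤ (RTF s) ^ (s-1-1) * (lamTF s / 2) :=
          mul_le_mul hPle hρrle hρr.le (Real.rpow_nonneg hR0.le _)
        have h2 : Q * Q ≤ (RTF s) ^ (s-1) * (RTF s) ^ (s-1) :=
          mul_le_mul hQle hQle hQ0 (Real.rpow_nonneg hR0.le _)
        rw [hAeq, hAnum]
        nlinarith [mul_le_mul_of_nonneg_left h1 hc₁, mul_le_mul_of_nonneg_left h2 hc₂]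
      have hA0 : 0 ≤ A := by
        rw [hAeq]
        have t1 : (0:ℝ) ≤ (1/2) * s * (s-1) * (P * rhoTF s r) :=
          mul_nonneg hc₁ (mul_nonneg hP0 hρr.le)
        have t2 : (0:ℝ) ≤ (1/4) * s * s * (Q * Q) := mul_nonneg hc₂ (mul_nonneg hQ0 hQ0)
        linarith
      have hρar : rhoTF s a ≤ rhoTF s r := rhoTF_anti hs hmem.1.le hra
      have hsq : (rhoTF s a)^2 ≤ (rhoTF s r)^2 := by nlinarith
      have hfrac : A / (rhoTF s r)^2 ≤ M := by
        rw [hM]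
        exact div_le_div₀ hAnum0 hAle (by positivity) hsq
      -- from hmeq : (1/2) * ((-A) / ρr²) + 2Ω₀ = 0, i.e. 2Ω₀ = (1/2) (A/ρr²)
      have hnumer : ((1/2) * (-(s * ((s-1) * P))) * rhoTF s r -
        (1/2) * (-(s * Q)) * ((1/2) * (-(s * Q)))) = -A := by rw [hA]; ring
      rw [hnumer] at hmeq
      have hρrsq : (0:ℝ) < (rhoTF s r)^2 := by positivity
      have h2Ω : 2 * Ω₀ = (1/2) * (A / (rhoTF s r)^2) := by
        have : (-A) / (rhoTF s r)^2 = -(A / (rhoTF s r)^2) := neg_div _ _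
        rw [this] at hmeq
        linarith
      have hMbig : M + 1 ≤ Ω₀ := le_trans (le_max_right _ _) hΩ
      linarith [hfrac, h2Ω, hM0, hMbig]
    rw [Real.dist_eq, abs_lt]
    constructor
    · simp only [ha] at hra; linarith
    · linarith [hmem.2]
end
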